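/- arXiv:math/0404386 — 3 statements merged into one kernel-verified Lean document; each statement's English description precedes it below -/
import Mathlib

section
/- Let L and M be rank 1 torsion-free coherent sheaves on a normal variety X, and suppose there is a surjective map h : L ⊗ M → O_X. Then L and M are both locally free (invertible). -/
/-!
Since `R` is local and `h` hits `1`, writing a preimage of `1` as a sum of pure tensors shows
that `h (α ⊗ β)` is a unit for some `α ∈ L`, `β ∈ M`. Then `h (· ⊗ β) : L → R` hits a unit,
hence is surjective, and it is injective because `L` is torsion-free of rank one: an element
of its kernel would be linearly independent from `α`. Symmetrically for `M`.
-/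

open TensorProduct

theorem TensorProduct.exists_isUnit_apply_tmul_of_surjective {R M N : Type*} [CommRing R]
    [IsLocalRing R] [AddCommGroup M] [Module R M] [AddCommGroup N] [Module R N]
    {h : M ⊗[R] N →ₗ[R] R} (hh : Function.Surjective h) :
    ∃ m n, IsUnit (h (m ⊗ₜ n)) := by
  obtain ⟨x, hx⟩ := hh 1
  suffices ∀ x, IsUnit (h x) → ∃ m n, IsUnit (h (m ⊗ₜ n)) from this x (hx ▸ isUnit_one)
  intro x
  induction x using TensorProduct.induction_on with
  | zero => simp
  | tmul m n => exact fun hu => ⟨m, n, hu⟩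
  | add x y hx hy =>
    intro hu
    rw [map_add] at hu
    exact (IsLocalRing.isUnit_or_isUnit_of_isUnit_add hu).elim hx hy

theorem LinearMap.surjective_of_isUnit_apply {R L : Type*} [Semiring R] [AddCommMonoid L]
    [Module R L] {φ : L →ₗ[R] R} {α : L} (hα : IsUnit (φ α)) : Function.Surjective φ :=
  fun r => ⟨(r * ↑hα.unit⁻¹) • α, by simp [mul_assoc]⟩

theorem LinearMap.injective_of_rank_le_one {R L : Type*} [CommRing R] [IsDomain R]
    [AddCommGroup L] [Module R L] [NoZeroSMulDivisors R L] (hrk : Module.rank R L ≤ 1)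
    {φ : L →ₗ[R] R} (hφ : φ ≠ 0) : Function.Injective φ := by
  obtain ⟨α, hα⟩ : ∃ α, φ α ≠ 0 := by
    by_contra! h
    exact hφ (LinearMap.ext h)
  rw [← LinearMap.ker_eq_bot, Submodule.eq_bot_iff]
  intro x hx
  by_contra hx0
  have hind : LinearIndependent R ![α, x] := by
    refine LinearIndependent.pair_iff.mpr fun s t hst => ?_
    have hs : s = 0 := by
      simpa [LinearMap.mem_ker.mp hx, hα] using congr_arg φ hst
    subst hs
    exact ⟨rfl, by simpa [hx0] using hst⟩
  have := hind.cardinal_lift_le_rank.trans (Cardinal.lift_le.mpr hrk)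
  norm_num at this

theorem nonempty_linearEquiv_self_of_isUnit_apply {R L : Type*} [CommRing R] [IsDomain R]
    [AddCommGroup L] [Module R L] [NoZeroSMulDivisors R L] (hrk : Module.rank R L ≤ 1)
    {φ : L →ₗ[R] R} {α : L} (hα : IsUnit (φ α)) : Nonempty (L ≃ₗ[R] R) :=
  ⟨.ofBijective φ ⟨φ.injective_of_rank_le_one hrk (fun h0 => by simp [h0] at hα),
    φ.surjective_of_isUnit_apply hα⟩⟩

theorem rank_eq_one_of_rank_fractionRing_tensor_eq_one {R L : Type*} [CommRing R]
    [IsDomain R] [AddCommGroup L] [Module R L]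
    (hrk : Module.rank (FractionRing R) (FractionRing R ⊗[R] L) = 1) :
    Module.rank R L = 1 := by
  have := (TensorProduct.isBaseChange R L (FractionRing R)).lift_rank_eq
  rwa [hrk, Cardinal.lift_one, eq_comm, Cardinal.lift_eq_one] at this

theorem rank_one_torsionFree_of_surj_tensor_general
    (R : Type*) [CommRing R] [IsDomain R] [IsLocalRing R]
    (L M : Type*) [AddCommGroup L] [Module R L] [AddCommGroup M] [Module R M]
    [NoZeroSMulDivisors R L] [NoZeroSMulDivisors R M]
    (hrkL : Module.rank (FractionRing R) (FractionRing R ⊗[R] L) = 1)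
    (hrkM : Module.rank (FractionRing R) (FractionRing R ⊗[R] M) = 1)
    (h : L ⊗[R] M →ₗ[R] R) (hsurj : Function.Surjective h) :
    Nonempty (L ≃ₗ[R] R) ∧ Nonempty (M ≃ₗ[R] R) := by
  obtain ⟨α, β, hαβ⟩ := TensorProduct.exists_isUnit_apply_tmul_of_surjective hsurj
  have hL := rank_eq_one_of_rank_fractionRing_tensor_eq_one hrkL
  have hM := rank_eq_one_of_rank_fractionRing_tensor_eq_one hrkM
  exact ⟨nonempty_linearEquiv_self_of_isUnit_apply hL.le (φ := h ∘ₗ (mk R L M).flip β) hαβ,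
    nonempty_linearEquiv_self_of_isUnit_apply hM.le (φ := h ∘ₗ mk R L M α) hαβ⟩

/-- local form of the lemma on a normal variety: Let `R` be the local ring
of a point of a normal variety (a local domain), and let `L`, `M` be (stalks of) rank 1
torsion-free modules.  If there is a surjective map `h : L ⊗ M → R`, then `L` and `M`
are both free of rank 1 (i.e. the sheaves are locally free/invertible). -/
theorem rank_one_torsionFree_of_surj_tensor
    (R : Type*) [CommRing R] [IsDomain R] [IsLocalRing R]
    (L M : Type*) [AddCommGroup L] [Module R L] [AddCommGroup M] [Module R M]
    [Module.Finite R L] [Module.Finite R M]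
    [NoZeroSMulDivisors R L] [NoZeroSMulDivisors R M]
    (hrkL : Module.rank (FractionRing R) (FractionRing R ⊗[R] L) = 1)
    (hrkM : Module.rank (FractionRing R) (FractionRing R ⊗[R] M) = 1)
    (h : L ⊗[R] M →ₗ[R] R) (hsurj : Function.Surjective h) :
    Nonempty (L ≃ₗ[R] R) ∧ Nonempty (M ≃ₗ[R] R) :=
  rank_one_torsionFree_of_surj_tensor_general R L M hrkL hrkM h hsurj
end

section
/- With notation as above (M ≥ 1, gcd(a₁,…,aₙ,M)=1, cᵢ = gcd of the list omitting aᵢ together with M, C = ∏cᵢ, and r ≡ lC + Σ aᵢbᵢ (mod M) with 0 ≤ bᵢ < cᵢ): if integers u₁, …, uₙ satisfy Σᵢ aᵢuᵢ ≡ r (mod M), then uⱼ ≡ bⱼ (mod cⱼ) for every j. -/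
open Finset

/-!
Reduce the hypotheses modulo `cⱼ`, which divides `M`. Since `cⱼ` divides `C` and every `aᵢ` with
`i ≠ j`, both `Σ aᵢuᵢ ≡ r` and `r ≡ lC + Σ aᵢbᵢ` collapse to `aⱼuⱼ ≡ aⱼbⱼ (mod cⱼ)`. A common
divisor of `aⱼ` and `cⱼ` divides all the `aᵢ` and `M`, so `aⱼ` is a unit modulo `cⱼ` and cancels.
-/

theorem Int.ModEq.cancel_left_of_isCoprime {m a b c : ℤ} (hmc : IsCoprime m c)
    (h : c * a ≡ c * b [ZMOD m]) : a ≡ b [ZMOD m] :=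
  Int.modEq_iff_dvd.2 <| hmc.dvd_of_dvd_mul_left <| by
    simpa only [mul_sub] using Int.modEq_iff_dvd.1 h

theorem Nat.coprime_gcd_erase_gcd {ι : Type*} [DecidableEq ι] {s : Finset ι} {f : ι → ℕ}
    {m : ℕ} {j : ι} (hj : j ∈ s) (h : Nat.gcd (s.gcd f) m = 1) :
    Nat.Coprime (f j) (Nat.gcd ((s.erase j).gcd f) m) := by
  rwa [← insert_erase hj, gcd_insert, gcd_eq_nat_gcd, Nat.gcd_assoc] at h

theorem u_congr_b_general (n : ℕ) (M : ℕ) (a : Fin n → ℤ)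
    (h : Nat.gcd ((univ : Finset (Fin n)).gcd fun i => (a i).natAbs) M = 1)
    (c : Fin n → ℕ)
    (hc : ∀ i, c i = Nat.gcd (((univ : Finset (Fin n)).erase i).gcd fun j => (a j).natAbs) M)
    (r l : ℤ) (b : Fin n → ℤ)
    (hr : r ≡ l * (∏ i, (c i : ℤ)) + ∑ i, a i * b i [ZMOD (M : ℤ)])
    (u : Fin n → ℤ)
    (hu : (∑ i, a i * u i) ≡ r [ZMOD (M : ℤ)]) :
    ∀ j, u j ≡ b j [ZMOD (c j : ℤ)] := by
  intro j
  have hcM : (c j : ℤ) ∣ M := Int.natCast_dvd_natCast.2 <| hc j ▸ Nat.gcd_dvd_right _ _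
  have hca : ∀ i ∈ univ, i ≠ j → (c j : ℤ) ∣ a i := fun i _ hij =>
    Int.natCast_dvd.2 <| hc j ▸ (Nat.gcd_dvd_left _ _).trans (gcd_dvd (mem_erase.2 ⟨hij, mem_univ i⟩))
  have hsum : ∀ x : Fin n → ℤ, ∑ i, a i * x i ≡ a j * x j [ZMOD c j] := fun x =>
    Int.sum_modEq_single (absurd (mem_univ j)) fun i hi hij =>
      Int.modEq_zero_iff_dvd.2 <| (hca i hi hij).mul_right _
  have hC : l * ∏ i, (c i : ℤ) ≡ 0 [ZMOD c j] :=
    Int.modEq_zero_iff_dvd.2 <| (dvd_prod_of_mem _ (mem_univ j)).mul_left l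
  have hcop : IsCoprime (c j : ℤ) (a j) := by
    rw [Int.isCoprime_iff_gcd_eq_one, Int.gcd_comm, Int.gcd, Int.natAbs_natCast, hc j]
    exact Nat.coprime_gcd_erase_gcd (f := fun i => (a i).natAbs) (mem_univ j) h
  have hmod : ∑ i, a i * u i ≡ l * ∏ i, (c i : ℤ) + ∑ i, a i * b i [ZMOD c j] :=
    (hu.trans hr).of_dvd hcM
  have hab : a j * u j ≡ a j * b j [ZMOD c j] := by
    simpa only [zero_add] using ((hsum u).symm.trans hmod).trans (hC.add (hsum b))
  exact hab.cancel_left_of_isCoprime hcop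

/-- If `r ≡ lC + Σ aᵢbᵢ (mod M)` with `0 ≤ bᵢ < cᵢ` and
`Σ aᵢuᵢ ≡ r (mod M)`, then `uⱼ ≡ bⱼ (mod cⱼ)` for every `j`. -/
theorem u_congr_b (n : ℕ) (M : ℕ) (hM : 1 ≤ M) (a : Fin n → ℤ)
    (h : Nat.gcd ((univ : Finset (Fin n)).gcd fun i => (a i).natAbs) M = 1)
    (c : Fin n → ℕ)
    (hc : ∀ i, c i = Nat.gcd (((univ : Finset (Fin n)).erase i).gcd fun j => (a j).natAbs) M)
    (r l : ℤ) (b : Fin n → ℤ)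
    (hb : ∀ i, 0 ≤ b i ∧ b i < (c i : ℤ))
    (hr : r ≡ l * (∏ i, (c i : ℤ)) + ∑ i, a i * b i [ZMOD (M : ℤ)])
    (u : Fin n → ℤ)
    (hu : (∑ i, a i * u i) ≡ r [ZMOD (M : ℤ)]) :
    ∀ j, u j ≡ b j [ZMOD (c j : ℤ)] :=
  u_congr_b_general n M a h c hc r l b hr u hu
end

section
/- Let X = 𝔸ⁿ/μ_M(d₁,…,dₙ) with gcd(dᵢ, M) arbitrary but gcd(d₁,…,d̂ᵢ,…,dₙ, M) = 1 for every i, and let O_X(j) denote the ε^j-eigenspace of k[x₁,…,xₙ] under the μ_M-action xᵢ ↦ ε^{dᵢ}xᵢ, as a module over the invariant ring O_X = O_X(0). Then for the divisor Dⱼ = (xⱼ = 0)/μ_M, one has an isomorphism of O_X-modules O_X(Dⱼ) ≅ O_X(dⱼ), given by multiplication by xⱼ; concretely, xⱼ · O_X(Dⱼ) equals the span of monomials ∏xᵢ^{wᵢ} with wᵢ ≥ 0 and Σdᵢwᵢ ≡ dⱼ (mod M). -/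
open Finset

/-! Multiplication by the monomial `x^a` sends the monomial `x^v` to `x^(a + v)`, so it maps the
span of the monomials indexed by `S` onto the span of those indexed by the translate `a + S`.
For `a = eⱼ` this translate is exactly the set of exponents of `O_X(dⱼ)`: adding `eⱼ` turns the
condition `vⱼ ≥ -1` into `wⱼ ≥ 0` and shifts the weight `Σ dᵢ vᵢ` by `dⱼ`. -/

namespace AddMonoidAlgebra

theorem map_mulLeft_single_span_single {k G : Type*} [CommSemiring k] [AddMonoid G] (a : G)
    (S : Set G) :
    Submodule.map (LinearMap.mulLeft k (single a (1 : k)))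
        (Submodule.span k ((fun v => single v (1 : k)) '' S)) =
      Submodule.span k ((fun v => single v (1 : k)) '' ((a + ·) '' S)) := by
  rw [Submodule.map_span, Set.image_image, Set.image_image]
  simp only [LinearMap.mulLeft_apply, single_mul_single, one_mul]

end AddMonoidAlgebra

section Exponents

variable {ι : Type*} [DecidableEq ι]

theorem sub_single_one_bounds_iff_nonneg (w : ι → ℤ) (j : ι) :
    (-1 ≤ (w - Pi.single j 1 : ι → ℤ) j ∧ ∀ i, i ≠ j → 0 ≤ (w - Pi.single j 1 : ι → ℤ) i) ↔
      ∀ i, 0 ≤ w i := by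
  simp only [Pi.sub_apply, Pi.single_eq_same]
  constructor
  · rintro ⟨hj, hne⟩ i
    by_cases hij : i = j
    · subst hij; omega
    · simpa [Pi.single_eq_of_ne hij] using hne i hij
  · intro hw
    exact ⟨by linarith [hw j], fun i hij => by simpa [Pi.single_eq_of_ne hij] using hw i⟩

theorem single_one_add_image_eq [Fintype ι] (m : ℤ) (d : ι → ℤ) (j : ι) :
    (Pi.single j 1 + ·) '' {v : ι → ℤ | -1 ≤ v j ∧ (∀ i, i ≠ j → 0 ≤ v i) ∧ m ∣ ∑ i, d i * v i} =
      {w : ι → ℤ | (∀ i, 0 ≤ w i) ∧ m ∣ (∑ i, d i * w i) - d j} := by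
  rw [Set.image_add_left]
  ext w
  have hweight : ∑ i, d i * (w - Pi.single j 1 : ι → ℤ) i = (∑ i, d i * w i) - d j := by
    change d ⬝ᵥ (w - Pi.single j 1) = d ⬝ᵥ w - d j
    rw [dotProduct_sub, dotProduct_single, mul_one]
  simp only [Set.mem_preimage, Set.mem_ofPred_eq, neg_add_eq_sub, hweight, ← and_assoc,
    sub_single_one_bounds_iff_nonneg]

end Exponents

theorem mul_xj_image_eq_eigenspace_general
    (k : Type*) [Field k] (n M : ℕ)
    (d : Fin n → ℤ)
    (j : Fin n) :
    let R := AddMonoidAlgebra k (Fin n → ℤ)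
    let x : R := AddMonoidAlgebra.single (Pi.single j 1) (1 : k)
    let OX : ℤ → Submodule k R := fun t => Submodule.span k
      ((fun v : Fin n → ℤ => (AddMonoidAlgebra.single v (1 : k) : R)) ''
        {v | (∀ i, 0 ≤ v i) ∧ (M : ℤ) ∣ (∑ i, d i * v i) - t})
    let OD : Submodule k R := Submodule.span k
      ((fun v : Fin n → ℤ => (AddMonoidAlgebra.single v (1 : k) : R)) ''
        {v | -1 ≤ v j ∧ (∀ i, i ≠ j → 0 ≤ v i) ∧ (M : ℤ) ∣ ∑ i, d i * v i})
    Submodule.map (LinearMap.mulLeft k x) OD = OX (d j) := by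
  intro R x OX OD
  rw [AddMonoidAlgebra.map_mulLeft_single_span_single, single_one_add_image_eq]

/-- For `X = 𝔸ⁿ/μ_M(d₁,…,dₙ)` with `gcd(d₁,…,d̂ᵢ,…,dₙ,M)=1` for all `i`,
multiplication by `xⱼ` identifies `O_X(Dⱼ)` (monomials with `vⱼ ≥ -1`, `vᵢ ≥ 0` for
`i ≠ j`, `Σdᵢvᵢ ≡ 0 (mod M)`) with the eigenspace module `O_X(dⱼ)` (monomials with
`wᵢ ≥ 0` and `Σdᵢwᵢ ≡ dⱼ (mod M)`), inside the Laurent polynomial ring in `n`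
variables modeled as the monoid algebra of `Fin n → ℤ`. -/
theorem mul_xj_image_eq_eigenspace
    (k : Type*) [Field k] (n M : ℕ) (hM : 1 ≤ M) (hchar : (M : k) ≠ 0)
    (d : Fin n → ℤ)
    (h : ∀ i, Nat.gcd (((univ : Finset (Fin n)).erase i).gcd fun l => (d l).natAbs) M = 1)
    (j : Fin n) :
    let R := AddMonoidAlgebra k (Fin n → ℤ)
    let x : R := AddMonoidAlgebra.single (Pi.single j 1) (1 : k)
    let OX : ℤ → Submodule k R := fun t => Submodule.span k
      ((fun v : Fin n → ℤ => (AddMonoidAlgebra.single v (1 : k) : R)) ''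
        {v | (∀ i, 0 ≤ v i) ∧ (M : ℤ) ∣ (∑ i, d i * v i) - t})
    let OD : Submodule k R := Submodule.span k
      ((fun v : Fin n → ℤ => (AddMonoidAlgebra.single v (1 : k) : R)) ''
        {v | -1 ≤ v j ∧ (∀ i, i ≠ j → 0 ≤ v i) ∧ (M : ℤ) ∣ ∑ i, d i * v i})
    Submodule.map (LinearMap.mulLeft k x) OD = OX (d j) :=
  mul_xj_image_eq_eigenspace_general k n M d j
end
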